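/- Let Q = Q(r,m,n) be a tree of diameter four with n ≥ 1 and (r,m,n) ≠ (0,1,1). Then χ'_s(Q) = n_1(Q) = r + m + Σ_{i=1}^{n} r_i. -/

import Mathlib

open SimpleGraph

variable {V : Type*}

/-- A vertex distinguishing proper edge `k`-coloring (vdec): a proper edge coloring
(edges sharing an endpoint get different colors) such that distinct vertices have
distinct sets of colors on their incident edges. -/
def IsVDEC (G : SimpleGraph V) (k : ℕ) (c : Sym2 V → Fin k) : Prop :=
  (∀ ⦃u v w : V⦄, G.Adj u v → G.Adj u w → v ≠ w → c s(u, v) ≠ c s(u, w)) ∧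
  (∀ u v : V, u ≠ v →
    {i : Fin k | ∃ w, G.Adj u w ∧ c s(u, w) = i} ≠
    {i : Fin k | ∃ w, G.Adj v w ∧ c s(v, w) = i})

/-- `χ'ₛ(G)`: the minimum number of colors in a vdec of `G`. -/
noncomputable def vdecNum (G : SimpleGraph V) : ℕ :=
  sInf {k : ℕ | ∃ c : Sym2 V → Fin k, IsVDEC G k c}

/-- `n_d(G)`: the number of vertices of degree `d` in `G`. -/
noncomputable def numDeg (G : SimpleGraph V) (d : ℕ) : ℕ :=
  Nat.card {v : V // Nat.card (G.neighborSet v) = d}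

/-- Vertex type of the tree `Q(r,m,n)`: the center `w₀`, the leaves `w₁,…,w_r`,
the pairs `sᵢ, s'ᵢ` (encoded as `(i,0)` and `(i,1)`), the vertices `t₁,…,tₙ`,
and the leaves `t'_{i,j}` for `j < rv i`. -/
abbrev QVert (r m n : ℕ) (rv : Fin n → ℕ) : Type :=
  Unit ⊕ Fin r ⊕ (Fin m × Fin 2) ⊕ (Fin n ⊕ Σ i : Fin n, Fin (rv i))

/-- The tree `Q(r,m,n)` of diameter four: the center `w₀` is adjacent to the `r` leaves
`wᵢ`, to the `m` vertices `sᵢ` (each `sᵢ` having one further leaf neighbor `s'ᵢ`),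
and to the `n` vertices `tᵢ`, where `tᵢ` has `rv i` further neighbors, all leaves. -/
def QGraph (r m n : ℕ) (rv : Fin n → ℕ) : SimpleGraph (QVert r m n rv) :=
  SimpleGraph.fromRel (fun a b =>
    (a = Sum.inl () ∧
      ((∃ i, b = Sum.inr (Sum.inl i)) ∨
       (∃ i, b = Sum.inr (Sum.inr (Sum.inl (i, (0 : Fin 2))))) ∨
       (∃ i, b = Sum.inr (Sum.inr (Sum.inr (Sum.inl i)))))) ∨
    (∃ i : Fin m, a = Sum.inr (Sum.inr (Sum.inl (i, (0 : Fin 2)))) ∧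
       b = Sum.inr (Sum.inr (Sum.inl (i, (1 : Fin 2))))) ∨
    (∃ (i : Fin n) (j : Fin (rv i)), a = Sum.inr (Sum.inr (Sum.inr (Sum.inl i))) ∧
       b = Sum.inr (Sum.inr (Sum.inr (Sum.inr ⟨i, j⟩)))))

/-!
A vertex of degree one sees only the colour of its edge, so a vdec needs at least `n₁(Q)`
colours. Conversely, take the leaves themselves as colours: each leaf edge gets the colour of
its leaf, and the edge from `w₀` to an inner vertex `sᵢ` or `tᵢ` gets the colour of the first
leaf below the next inner vertex in a cyclic order of all `m + n` of them. Diameter four forces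
`m + n ≥ 2`, so this rotation has no fixed point and the colouring is proper. Palettes are
distinct: leaves have distinct singleton palettes, `tᵢ` is the only non-leaf vertex seeing the
second leaf of `tᵢ`, the palettes of `sᵢ` and `w₀` have different sizes unless
`(r,m,n) = (0,1,1)`, and `sᵢ ≠ sⱼ` could share a palette only through a 2-cycle of the
rotation, which needs `m + n = 2`.
-/

open Function Set

section EdgeColoring

variable {α β : Type*} (G : SimpleGraph V)

def palette (c : Sym2 V → α) (v : V) : Set α := {i | ∃ w, G.Adj v w ∧ c s(v, w) = i}

def IsProperEdgeColoring (c : Sym2 V → α) : Prop :=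
  ∀ v, InjOn (fun w => c s(v, w)) (G.neighborSet v)

variable {G}

lemma palette_eq_image (c : Sym2 V → α) (v : V) :
    palette G c v = (fun w => c s(v, w)) '' G.neighborSet v := rfl

lemma palette_comp (e : α → β) (c : Sym2 V → α) (v : V) :
    palette G (e ∘ c) v = e '' palette G c v := by
  simp only [palette_eq_image, image_image, comp_apply]

lemma palette_eq_singleton {c : Sym2 V → α} {v w : V} (h : G.neighborSet v = {w}) :
    palette G c v = {c s(v, w)} := by
  rw [palette_eq_image, h, image_singleton]

lemma IsProperEdgeColoring.ncard_palette {c : Sym2 V → α} (hc : IsProperEdgeColoring G c)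
    (v : V) : (palette G c v).ncard = (G.neighborSet v).ncard :=
  (hc v).ncard_image

lemma IsVDEC.numDeg_one_le {k : ℕ} {c : Sym2 V → Fin k} (hc : IsVDEC G k c) :
    numDeg G 1 ≤ k := by
  have hleaf (v : {v // Nat.card (G.neighborSet v) = 1}) : ∃ w, G.neighborSet v = {w} := by
    rw [← ncard_eq_one, ← Nat.card_coe_set_eq]
    exact v.2
  choose w hw using hleaf
  have hinj : Injective fun v => c s(v.1, w v) := by
    intro u v huv
    by_contra hne
    refine hc.2 u v (Subtype.coe_injective.ne hne) ?_
    change palette G c u = palette G c v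
    rw [palette_eq_singleton (hw u), palette_eq_singleton (hw v)]
    exact congrArg _ huv
  simpa [numDeg] using Nat.card_le_card_of_injective _ hinj

lemma IsProperEdgeColoring.isVDEC_comp {k : ℕ} {c : Sym2 V → α}
    (hc : IsProperEdgeColoring G c) (hpal : Injective (palette G c)) {e : α → Fin k}
    (he : Injective e) : IsVDEC G k (e ∘ c) := by
  refine ⟨fun u v w huv huw hvw => he.ne fun h => hvw (hc u huv huw h), fun u v huv => ?_⟩
  change palette G (e ∘ c) u ≠ palette G (e ∘ c) v
  simp only [palette_comp]
  exact ((image_injective.2 he).comp hpal).ne huv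

lemma IsProperEdgeColoring.vdecNum_eq_numDeg_one [Finite α] (hα : Nat.card α = numDeg G 1)
    {c : Sym2 V → α} (hc : IsProperEdgeColoring G c) (hpal : Injective (palette G c)) :
    vdecNum G = numDeg G 1 := by
  have hvdec := hc.isVDEC_comp hpal (Finite.equivFinOfCardEq hα).injective
  exact le_antisymm (Nat.sInf_le ⟨_, hvdec⟩)
    (le_csInf ⟨_, _, hvdec⟩ fun _ ⟨_, hc'⟩ => hc'.numDeg_one_le)

end EdgeColoring

lemma SimpleGraph.diam_le_three_of_dominating_adj {G : SimpleGraph V} {a b : V}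
    (hab : G.Adj a b) (h : ∀ v, G.edist a v ≤ 1 ∨ G.edist b v ≤ 1) : G.diam ≤ 3 := by
  have near (v : V) : ∃ x ∈ ({a, b} : Set V), G.edist x v ≤ 1 :=
    (h v).elim (⟨a, .inl rfl, ·⟩) (⟨b, .inr rfl, ·⟩)
  have close : ∀ x ∈ ({a, b} : Set V), ∀ y ∈ ({a, b} : Set V), G.edist x y ≤ 1 := by
    rintro x (rfl | rfl) y (rfl | rfl) <;> simp [edist_le_one_iff_adj_or_eq, hab, hab.symm]
  refine ENat.toNat_le_of_le_natCast (ediam_le_of_edist_le fun u v => ?_)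
  obtain ⟨x, hx, hux⟩ := near u
  obtain ⟨y, hy, hvy⟩ := near v
  calc G.edist u v ≤ G.edist u y + G.edist y v := G.edist_triangle
    _ ≤ G.edist u x + G.edist x y + G.edist y v := by gcongr; exact G.edist_triangle
    _ ≤ 1 + 1 + 1 := add_le_add (add_le_add (G.edist_comm.trans_le hux) (close x hx y hy)) hvy
    _ = 3 := rfl

lemma finRotate_ne_self {N : ℕ} (hN : 2 ≤ N) (i : Fin N) : finRotate N i ≠ i :=
  Equiv.Perm.mem_support.1 (support_finRotate_of_le hN ▸ Finset.mem_univ i)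

lemma finRotate_finRotate_ne_self {N : ℕ} (hN : 3 ≤ N) (i : Fin N) :
    finRotate N (finRotate N i) ≠ i := by
  obtain ⟨k, rfl⟩ : ∃ k, N = k + 1 := ⟨N - 1, by omega⟩
  have := i.isLt
  simp only [ne_eq, Fin.ext_iff, coe_finRotate, Fin.val_last]
  split_ifs <;> simp_all <;> omega

namespace QGraph

variable {r m n : ℕ} {rv : Fin n → ℕ}

abbrev w0 : QVert r m n rv := Sum.inl ()
abbrev w (i : Fin r) : QVert r m n rv := Sum.inr (Sum.inl i)
abbrev s (i : Fin m) : QVert r m n rv := Sum.inr (Sum.inr (Sum.inl (i, 0)))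
abbrev s' (i : Fin m) : QVert r m n rv := Sum.inr (Sum.inr (Sum.inl (i, 1)))
abbrev t (i : Fin n) : QVert r m n rv := Sum.inr (Sum.inr (Sum.inr (Sum.inl i)))
abbrev t' (i : Fin n) (j : Fin (rv i)) : QVert r m n rv :=
  Sum.inr (Sum.inr (Sum.inr (Sum.inr ⟨i, j⟩)))

abbrev Leaf (r m : ℕ) (rv : Fin n → ℕ) : Type := Fin r ⊕ Fin m ⊕ Σ i : Fin n, Fin (rv i)

def leaf : Leaf r m rv → QVert r m n rv
  | .inl i => w i
  | .inr (.inl i) => s' i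
  | .inr (.inr ⟨i, j⟩) => t' i j

def parent : Leaf r m rv → QVert r m n rv
  | .inl _ => w0
  | .inr (.inl i) => s i
  | .inr (.inr ⟨i, _⟩) => t i

def inner : Fin m ⊕ Fin n → QVert r m n rv := Sum.elim s t

lemma leaf_injective : Injective (leaf (r := r) (m := m) (rv := rv)) := by
  rintro (_ | _ | ⟨_, _⟩) (_ | _ | ⟨_, _⟩) h <;> simp_all [leaf]

lemma card_leaf : Nat.card (Leaf r m rv) = r + m + ∑ i, rv i := by
  simp [add_assoc]

lemma vertex_cases (v : QVert r m n rv) :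
    (∃ x, v = leaf x) ∨ v = w0 ∨ (∃ i, v = s i) ∨ ∃ i, v = t i := by
  rcases v with _ | i | ⟨i, b⟩ | i | ⟨i, j⟩
  · exact .inr (.inl rfl)
  · exact .inl ⟨.inl i, rfl⟩
  · fin_cases b
    exacts [.inr (.inr (.inl ⟨i, rfl⟩)), .inl ⟨.inr (.inl i), rfl⟩]
  · exact .inr (.inr (.inr ⟨i, rfl⟩))
  · exact .inl ⟨.inr (.inr ⟨i, j⟩), rfl⟩

lemma neighborSet_leaf (x : Leaf r m rv) :
    (QGraph r m n rv).neighborSet (leaf x) = {parent x} := by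
  ext v
  rcases x with i | i | ⟨i, j⟩ <;> aesop (add simp [QGraph, leaf, parent])

lemma neighborSet_w0 : (QGraph r m n rv).neighborSet w0 = range (Sum.elim w inner) := by
  ext v
  aesop (add simp [QGraph, inner])

lemma neighborSet_s (i : Fin m) : (QGraph r m n rv).neighborSet (s i) = {w0, s' i} := by
  ext v
  aesop (add simp QGraph)

lemma neighborSet_t (i : Fin n) :
    (QGraph r m n rv).neighborSet (t i) = insert w0 (range (t' i)) := by
  ext v
  aesop (add simp QGraph)

lemma ncard_neighborSet_leaf (x : Leaf r m rv) :
    ((QGraph r m n rv).neighborSet (leaf x)).ncard = 1 := by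
  rw [neighborSet_leaf, ncard_singleton]

lemma ncard_neighborSet_w0 : ((QGraph r m n rv).neighborSet w0).ncard = r + m + n := by
  have hinj : Injective (Sum.elim w inner : _ → QVert r m n rv) := by
    rintro (_ | _ | _) (_ | _ | _) h <;> simp_all [inner]
  rw [neighborSet_w0, ncard_range_of_injective hinj]
  simp [add_assoc]

lemma ncard_neighborSet_s (i : Fin m) : ((QGraph r m n rv).neighborSet (s i)).ncard = 2 := by
  rw [neighborSet_s, ncard_pair (by simp)]

lemma ncard_neighborSet_t (i : Fin n) :
    ((QGraph r m n rv).neighborSet (t i)).ncard = rv i + 1 := by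
  have hinj : Injective (t' (r := r) (m := m) (rv := rv) i) := fun j j' h => by simpa using h
  rw [neighborSet_t, ncard_insert_of_notMem (by simp), ncard_range_of_injective hinj,
    Nat.card_eq_fintype_card, Fintype.card_fin]

lemma ncard_neighborSet_eq_one_iff (h : r + m + n ≠ 1) (hrv : ∀ i, rv i ≠ 0)
    (v : QVert r m n rv) : ((QGraph r m n rv).neighborSet v).ncard = 1 ↔ v ∈ range leaf := by
  refine ⟨fun hv => ?_, fun ⟨x, hx⟩ => hx ▸ ncard_neighborSet_leaf x⟩
  rcases vertex_cases v with ⟨x, rfl⟩ | rfl | ⟨i, rfl⟩ | ⟨i, rfl⟩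
  · exact ⟨x, rfl⟩
  · exact absurd (ncard_neighborSet_w0.symm.trans hv) h
  · simp [ncard_neighborSet_s] at hv
  · simp [ncard_neighborSet_t, hrv] at hv

lemma numDeg_one (h : r + m + n ≠ 1) (hrv : ∀ i, rv i ≠ 0) :
    numDeg (QGraph r m n rv) 1 = r + m + ∑ i, rv i := by
  simp only [numDeg, Nat.card_coe_set_eq, ncard_neighborSet_eq_one_iff h hrv]
  rw [ncard_range_of_injective leaf_injective, card_leaf]

lemma diam_le_three (hm : m = 0) (hn : n = 1) : (QGraph r m n rv).diam ≤ 3 := by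
  subst hm hn
  refine diam_le_three_of_dominating_adj (a := w0) (b := t 0) (by simp [QGraph]) fun v => ?_
  simp only [edist_le_one_iff_adj_or_eq]
  rcases v with _ | i | ⟨i, _⟩ | i | ⟨i, j⟩
  · simp
  · simp [QGraph]
  · exact i.elim0
  · simp [Subsingleton.elim i 0]
  · obtain rfl := Subsingleton.elim i 0
    simp [QGraph]

variable (m n) in
def rot : Equiv.Perm (Fin m ⊕ Fin n) := finSumFinEquiv.symm.permCongr (finRotate (m + n))

lemma rot_ne_self (h : 2 ≤ m + n) (p : Fin m ⊕ Fin n) : rot m n p ≠ p := by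
  simpa [rot, Equiv.permCongr_apply, Equiv.symm_apply_eq] using
    finRotate_ne_self h (finSumFinEquiv p)

lemma rot_rot_ne_self (h : 3 ≤ m + n) (p : Fin m ⊕ Fin n) : rot m n (rot m n p) ≠ p := by
  simpa [rot, Equiv.permCongr_apply, Equiv.symm_apply_eq] using
    finRotate_finRotate_ne_self h (finSumFinEquiv p)

def depth : QVert r m n rv → ℕ
  | .inl _ => 0
  | .inr (.inr (.inl (_, b))) => b + 1
  | .inr (.inr (.inr (.inr _))) => 2
  | _ => 1

section Coloring

variable (hn : 0 < n) (hrv : ∀ i, 2 ≤ rv i)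

def firstLeafColor : Fin m ⊕ Fin n → Leaf r m rv
  | .inl i => .inr (.inl i)
  | .inr i => .inr (.inr ⟨i, ⟨0, Nat.zero_lt_of_lt (hrv i)⟩⟩)

def secondLeafColor (i : Fin n) : Leaf r m rv := .inr (.inr ⟨i, ⟨1, hrv i⟩⟩)

def parentEdgeColor : QVert r m n rv → Leaf r m rv
  -- `w0` has no parent edge; this value is arbitrary.
  | .inl _ => firstLeafColor hrv (.inr ⟨0, hn⟩)
  | .inr (.inl i) => .inl i
  | .inr (.inr (.inl (i, b))) =>
    if b = 0 then firstLeafColor hrv (rot m n (.inl i)) else .inr (.inl i)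
  | .inr (.inr (.inr (.inl i))) => firstLeafColor hrv (rot m n (.inr i))
  | .inr (.inr (.inr (.inr x))) => .inr (.inr x)

-- Equal depths occur only on non-edges, so the last branch is never used on an edge.
def edgeColor : Sym2 (QVert r m n rv) → Leaf r m rv :=
  Sym2.lift ⟨fun u v =>
    if depth u < depth v then parentEdgeColor hn hrv v
    else if depth v < depth u then parentEdgeColor hn hrv u
    else parentEdgeColor hn hrv w0, fun u v => by
      dsimp only
      split_ifs <;> first | rfl | omega⟩

variable {hn hrv}

lemma firstLeafColor_injective : Injective (firstLeafColor (r := r) (m := m) hrv) := by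
  rintro (i | i) (i' | i') h <;>
    simp only [firstLeafColor, Sum.inr.injEq, Sum.inl.injEq, reduceCtorEq,
      Sigma.mk.inj_iff] at h ⊢
  exacts [h, h.1]

lemma firstLeafColor_eq_inr_inr {p : Fin m ⊕ Fin n} {i : Fin n} {j : Fin (rv i)}
    (h : firstLeafColor (r := r) hrv p = .inr (.inr ⟨i, j⟩)) :
    p = .inr i ∧ (j : ℕ) = 0 := by
  rcases p with p | p <;>
    simp only [firstLeafColor, Sum.inr.injEq, reduceCtorEq, Sigma.mk.inj_iff] at h
  obtain ⟨rfl, h⟩ := h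
  exact ⟨rfl, by rw [← eq_of_heq h]⟩

lemma firstLeafColor_ne_inl (p : Fin m ⊕ Fin n) (a : Fin r) :
    firstLeafColor hrv p ≠ .inl a := by
  rcases p with p | p <;> simp [firstLeafColor]

lemma firstLeafColor_ne_secondLeafColor (p : Fin m ⊕ Fin n) (i : Fin n) :
    firstLeafColor hrv p ≠ secondLeafColor (r := r) hrv i :=
  fun h => one_ne_zero (firstLeafColor_eq_inr_inr h).2

lemma edgeColor_of_depth_lt {u v : QVert r m n rv} (h : depth u < depth v) :
    edgeColor hn hrv s(u, v) = parentEdgeColor hn hrv v := by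
  simp [edgeColor, h]

lemma edgeColor_of_depth_gt {u v : QVert r m n rv} (h : depth v < depth u) :
    edgeColor hn hrv s(u, v) = parentEdgeColor hn hrv u := by
  rw [Sym2.eq_swap, edgeColor_of_depth_lt h]

lemma edgeColor_w0_comp : (fun u => edgeColor hn hrv s(w0, u)) ∘ Sum.elim w inner =
    Sum.elim (Sum.inl : Fin r → Leaf r m rv) (firstLeafColor hrv ∘ rot m n) := by
  ext (i | i | i) <;> rw [comp_apply, edgeColor_of_depth_lt] <;>
    simp [inner, depth, parentEdgeColor]

lemma isProperEdgeColoring_edgeColor (h : 2 ≤ m + n) :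
    IsProperEdgeColoring (QGraph r m n rv) (edgeColor hn hrv) := by
  intro v
  rcases vertex_cases v with ⟨x, rfl⟩ | rfl | ⟨i, rfl⟩ | ⟨i, rfl⟩
  · rw [neighborSet_leaf]
    exact injOn_singleton _ _
  · rw [neighborSet_w0]
    refine Injective.injOn_range ?_
    rw [edgeColor_w0_comp]
    exact Sum.inl_injective.sumElim (firstLeafColor_injective.comp (rot m n).injective)
      fun a p => (firstLeafColor_ne_inl (rot m n p) a).symm
  · rw [neighborSet_s, injOn_pair, edgeColor_of_depth_gt (by simp [depth]),
      edgeColor_of_depth_lt (by simp [depth])]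
    intro hcol
    have hrot : rot m n (.inl i) = .inl i := firstLeafColor_injective (hrv := hrv)
      (by simpa [parentEdgeColor, firstLeafColor] using hcol)
    exact (rot_ne_self h _ hrot).elim
  · rw [neighborSet_t, injOn_insert (by simp), ← range_comp]
    refine ⟨Injective.injOn_range fun j j' hj => ?_, ?_⟩
    · rw [comp_apply, comp_apply, edgeColor_of_depth_lt (by simp [depth]),
        edgeColor_of_depth_lt (by simp [depth])] at hj
      simpa [parentEdgeColor] using hj
    · rintro ⟨j, hj⟩
      rw [comp_apply, edgeColor_of_depth_lt (by simp [depth]),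
        edgeColor_of_depth_gt (by simp [depth])] at hj
      exact rot_ne_self h _ (firstLeafColor_eq_inr_inr (hrv := hrv) hj.symm).1

lemma palette_leaf (x : Leaf r m rv) :
    palette (QGraph r m n rv) (edgeColor hn hrv) (leaf x) = {x} := by
  rw [palette_eq_singleton (neighborSet_leaf x), edgeColor_of_depth_gt]
  all_goals rcases x with i | i | ⟨i, j⟩ <;> simp [leaf, parent, depth, parentEdgeColor]

lemma palette_w0 : palette (QGraph r m n rv) (edgeColor hn hrv) w0 =
    range (Sum.elim Sum.inl (firstLeafColor hrv ∘ rot m n)) := by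
  rw [palette_eq_image, neighborSet_w0, ← range_comp, edgeColor_w0_comp]

lemma palette_s (i : Fin m) : palette (QGraph r m n rv) (edgeColor hn hrv) (s i) =
    {firstLeafColor hrv (rot m n (.inl i)), firstLeafColor hrv (.inl i)} := by
  rw [palette_eq_image, neighborSet_s, image_pair, edgeColor_of_depth_gt, edgeColor_of_depth_lt]
  all_goals simp [depth, parentEdgeColor, firstLeafColor]

lemma palette_t (i : Fin n) : palette (QGraph r m n rv) (edgeColor hn hrv) (t i) =
    insert (firstLeafColor hrv (rot m n (.inr i))) (range fun j => .inr (.inr ⟨i, j⟩)) := by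
  rw [palette_eq_image, neighborSet_t, image_insert_eq, ← range_comp]
  exact congr_arg₂ insert (edgeColor_of_depth_gt (by simp [depth]))
    (congrArg range (funext fun j => edgeColor_of_depth_lt (by simp [depth])))

lemma eq_of_secondLeafColor_mem_palette {i : Fin n} {v : QVert r m n rv}
    (h : secondLeafColor hrv i ∈ palette (QGraph r m n rv) (edgeColor hn hrv) v) :
    v = t i ∨ v = leaf (secondLeafColor hrv i) := by
  rcases vertex_cases v with ⟨x, rfl⟩ | rfl | ⟨j, rfl⟩ | ⟨j, rfl⟩
  · rw [palette_leaf, mem_singleton_iff] at h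
    exact .inr (h ▸ rfl)
  · rw [palette_w0] at h
    obtain ⟨a | p, hp⟩ := h
    · exact (Sum.inl_ne_inr hp).elim
    · exact absurd hp (firstLeafColor_ne_secondLeafColor _ _)
  · rw [palette_s, mem_insert_iff, mem_singleton_iff] at h
    rcases h with hp | hp <;> exact absurd hp.symm (firstLeafColor_ne_secondLeafColor _ _)
  · rw [palette_t] at h
    rcases h with hp | ⟨k, hk⟩
    · exact absurd hp.symm (firstLeafColor_ne_secondLeafColor _ _)
    · exact .inl (congrArg t (congrArg Sigma.fst (Sum.inr_injective (Sum.inr_injective hk))))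

lemma eq_leaf_of_palette_eq (h : 2 ≤ m + n) {u : QVert r m n rv} {x : Leaf r m rv}
    (hu : palette (QGraph r m n rv) (edgeColor hn hrv) u =
      palette (QGraph r m n rv) (edgeColor hn hrv) (leaf x)) : u = leaf x := by
  rw [palette_leaf] at hu
  have hdeg : ((QGraph r m n rv).neighborSet u).ncard = 1 := by
    rw [← (isProperEdgeColoring_edgeColor (hn := hn) (hrv := hrv) h).ncard_palette, hu,
      ncard_singleton]
  obtain ⟨y, rfl⟩ := (ncard_neighborSet_eq_one_iff (by omega)
    (fun i => (Nat.zero_lt_of_lt (hrv i)).ne') u).1 hdeg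
  rw [palette_leaf, singleton_eq_singleton_iff] at hu
  rw [hu]

lemma eq_t_of_palette_eq (h : 2 ≤ m + n) {u : QVert r m n rv} {i : Fin n}
    (hu : palette (QGraph r m n rv) (edgeColor hn hrv) u =
      palette (QGraph r m n rv) (edgeColor hn hrv) (t i)) : u = t i := by
  have hmem : secondLeafColor hrv i ∈ palette (QGraph r m n rv) (edgeColor hn hrv) (t i) := by
    rw [palette_t]
    exact .inr ⟨_, rfl⟩
  rcases eq_of_secondLeafColor_mem_palette (hu ▸ hmem) with rfl | rfl
  · rfl
  · have hcard := congrArg ncard hu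
    simp only [(isProperEdgeColoring_edgeColor h).ncard_palette, ncard_neighborSet_leaf,
      ncard_neighborSet_t] at hcard
    have := hrv i
    omega

lemma palette_s_ne_palette_w0 (h : 2 ≤ m + n) (hne : ¬(r = 0 ∧ m = 1 ∧ n = 1)) (i : Fin m) :
    palette (QGraph r m n rv) (edgeColor hn hrv) (s i) ≠
      palette (QGraph r m n rv) (edgeColor hn hrv) w0 := by
  intro hi
  have hcard := congrArg ncard hi
  simp only [(isProperEdgeColoring_edgeColor h).ncard_palette, ncard_neighborSet_s,
    ncard_neighborSet_w0] at hcard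
  have := i.pos
  omega

lemma palette_s_injective (h : 2 ≤ m + n) :
    Injective fun i : Fin m => palette (QGraph r m n rv) (edgeColor hn hrv) (s i) := by
  intro i j hij
  simp only [palette_s] at hij
  rcases pair_eq_pair_iff.1 hij with ⟨-, hi⟩ | ⟨hi, hj⟩
  · exact Sum.inl_injective (firstLeafColor_injective hi)
  · by_contra hne
    have : 3 ≤ m + n := by
      have := Fin.val_ne_of_ne hne
      omega
    exact rot_rot_ne_self this (.inl i)
      (by rw [firstLeafColor_injective hi, firstLeafColor_injective hj])

lemma palette_injective (h : 2 ≤ m + n) (hne : ¬(r = 0 ∧ m = 1 ∧ n = 1)) :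
    Injective (palette (QGraph r m n rv) (edgeColor hn hrv)) := by
  intro u v huv
  rcases vertex_cases v with ⟨x, rfl⟩ | rfl | ⟨i, rfl⟩ | ⟨i, rfl⟩
  · exact eq_leaf_of_palette_eq h huv
  · rcases vertex_cases u with ⟨x, rfl⟩ | rfl | ⟨j, rfl⟩ | ⟨j, rfl⟩
    · exact (eq_leaf_of_palette_eq h huv.symm).symm
    · rfl
    · exact absurd huv (palette_s_ne_palette_w0 h hne j)
    · exact (eq_t_of_palette_eq h huv.symm).symm
  · rcases vertex_cases u with ⟨x, rfl⟩ | rfl | ⟨j, rfl⟩ | ⟨j, rfl⟩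
    · exact (eq_leaf_of_palette_eq h huv.symm).symm
    · exact absurd huv.symm (palette_s_ne_palette_w0 h hne i)
    · exact congrArg s (palette_s_injective h huv)
    · exact (eq_t_of_palette_eq h huv.symm).symm
  · exact eq_t_of_palette_eq h huv

end Coloring

end QGraph

/-- For a tree `Q = Q(r,m,n)` of diameter four with `n ≥ 1` and
`(r,m,n) ≠ (0,1,1)`, `χ'ₛ(Q) = n₁(Q) = r + m + Σ_{i=1}^{n} rᵢ`. -/
theorem vdecNum_QGraph_n_pos (r m n : ℕ) (rv : Fin n → ℕ) (hn : 1 ≤ n)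
    (hrv : ∀ i, 2 ≤ rv i) (hdiam : (QGraph r m n rv).diam = 4)
    (hne : ¬(r = 0 ∧ m = 1 ∧ n = 1)) :
    vdecNum (QGraph r m n rv) = numDeg (QGraph r m n rv) 1 ∧
    numDeg (QGraph r m n rv) 1 = r + m + ∑ i, rv i := by
  have h : 2 ≤ m + n := by
    by_contra! hmn
    have := QGraph.diam_le_three (r := r) (m := m) (rv := rv) (by omega) (by omega)
    omega
  have hleaves : numDeg (QGraph r m n rv) 1 = r + m + ∑ i, rv i :=
    QGraph.numDeg_one (by omega) fun i => (Nat.zero_lt_of_lt (hrv i)).ne'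
  refine ⟨?_, hleaves⟩
  exact (QGraph.isProperEdgeColoring_edgeColor (hn := hn) (hrv := hrv) h).vdecNum_eq_numDeg_one
    (QGraph.card_leaf.trans hleaves.symm) (QGraph.palette_injective h hne)
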